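/- arXiv:1904.04468 — 6 statements merged into one kernel-verified Lean document; each statement's English description precedes it below -/
import Mathlib

section
/- Let F be a field, A_1, ..., A_k pairwise disjoint subsets of [m], and for each i let v_i = α_i e_{d_i} + c_i ∈ F^m where α_i ≠ 0, d_i ∉ A_i, and c_i is a nonzero vector supported in A_i. If v_i and v_j (i ≠ j) are linearly dependent, then d_i ∈ A_j and d_j ∈ A_i. -/
/-!
Since `v i` and `v j` are nonzero, a nontrivial relation `a • v i + b • v j = 0` has both
coefficients nonzero, so `v i` and `v j` have the same support. The support of `v i` is
`insert (d i) (support (c i))`, with `support (c i)` a nonempty subset of `A i`. Hence `d i`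
lies in the support of `v j`: either in `A j`, or `d i = d j`; in the latter case a point of
`support (c i) ⊆ A i` would have to lie in `A j`, contradicting disjointness.
-/

open Function

theorem Function.support_smul_single_add {R ι : Type*} [Semiring R] [DecidableEq ι]
    {α : R} (hα : α ≠ 0) {d : ι} {c : ι → R} (hcd : c d = 0) :
    support (α • Pi.single d (1 : R) + c) = insert d (support c) := by
  ext x
  rcases eq_or_ne x d with rfl | hx
  · simp [hcd, hα]
  · simp [hx]

theorem Function.support_eq_of_smul_add_smul_eq_zero {R ι : Type*} [Ring R] [NoZeroDivisors R]
    {u w : ι → R} (hu : u ≠ 0) (hw : w ≠ 0) {a b : R} (hab : a ≠ 0 ∨ b ≠ 0)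
    (h : a • u + b • w = 0) : support u = support w := by
  have ha : a ≠ 0 := by
    rintro rfl
    simp only [zero_smul, zero_add, smul_eq_zero] at h
    exact h.elim (hab.resolve_left fun h0 => h0 rfl) hw
  have hb : b ≠ 0 := by
    rintro rfl
    simp only [zero_smul, add_zero, smul_eq_zero] at h
    exact h.elim ha hu
  ext x
  have hx : a * u x + b * w x = 0 := by simpa using congrFun h x
  simp only [mem_support, ne_eq, not_iff_not]
  constructor
  · intro h0
    rw [h0, mul_zero, zero_add] at hx
    exact (mul_eq_zero.mp hx).resolve_left hb
  · intro h0
    rw [h0, mul_zero, add_zero] at hx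
    exact (mul_eq_zero.mp hx).resolve_left ha

theorem Set.mem_of_insert_eq_insert {α : Type*} {A B s t : Set α} {x y : α}
    (hAB : Disjoint A B) (hs : s ⊆ A) (ht : t ⊆ B) (hsne : s.Nonempty) (hx : x ∉ A)
    (h : insert x s = insert y t) : x ∈ B := by
  have hxy : x ∈ insert y t := h ▸ mem_insert x s
  rcases hxy with rfl | hxt
  · obtain ⟨z, hz⟩ := hsne
    have hzx : z ∈ insert x t := h ▸ mem_insert_of_mem x hz
    rcases hzx with rfl | hzt
    · exact absurd (hs hz) hx
    · exact absurd (ht hzt) (hAB.notMem_of_mem_left (hs hz))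
  · exact ht hxt

/-- Linear dependence of two decoding vectors `v i = α i • e_{d i} + c i` forces
a mutual loop: `d i ∈ A j` and `d j ∈ A i`. -/
theorem stmt_4 (F : Type*) [Field F] (m k : ℕ)
    (A : Fin k → Set (Fin m)) (hdisj : Pairwise (Function.onFun Disjoint A))
    (d : Fin k → Fin m) (α : Fin k → F) (c : Fin k → Fin m → F) (v : Fin k → Fin m → F)
    (hd : ∀ i, d i ∉ A i) (hα : ∀ i, α i ≠ 0) (hc0 : ∀ i, c i ≠ 0)
    (hcsupp : ∀ i j, c i j ≠ 0 → j ∈ A i)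
    (hv : ∀ i, v i = α i • (Pi.single (d i) (1 : F) : Fin m → F) + c i)
    (i j : Fin k) (hij : i ≠ j)
    (hdep : ∃ a b : F, (a ≠ 0 ∨ b ≠ 0) ∧ a • v i + b • v j = 0) :
    d i ∈ A j ∧ d j ∈ A i := by
  have hsuppA : ∀ l, support (c l) ⊆ A l := fun l x hx => hcsupp l x hx
  have hsupp : ∀ l, support (v l) = insert (d l) (support (c l)) := fun l => by
    rw [hv l]
    exact support_smul_single_add (hα l) (not_ne_iff.mp fun h => hd l (hcsupp l _ h))
  have hv0 : ∀ l, v l ≠ 0 := fun l => by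
    rw [← support_nonempty_iff, hsupp l]
    exact Set.insert_nonempty _ _
  obtain ⟨a, b, hab, hrel⟩ := hdep
  have heq := support_eq_of_smul_add_smul_eq_zero (hv0 i) (hv0 j) hab hrel
  rw [hsupp i, hsupp j] at heq
  exact ⟨Set.mem_of_insert_eq_insert (hdisj hij) (hsuppA i) (hsuppA j)
      (support_nonempty_iff.mpr (hc0 i)) (hd i) heq,
    Set.mem_of_insert_eq_insert (hdisj hij.symm) (hsuppA j) (hsuppA i)
      (support_nonempty_iff.mpr (hc0 j)) (hd j) heq.symm⟩
end

section
/- Let F = GF(2), m = 2sq with s, q ≥ 1, and side information sets A_i = {i mod m, ..., (i+s-1) mod m} for i ∈ ZMod m. Define the code with q codeword vectors x_t = e_{2ts} + e_{(2t-1)s} ∈ F^m for t ∈ [q] (indices mod m). Then for every user i there is exactly one index d_i ∉ A_i such that e_{d_i} lies in the span of {x_t} together with {e_j : j ∈ A_i}; namely, each user can decode exactly one new message. -/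
/-!
The codewords `e_{2ts} + e_{(2t-1)s}` have pairwise disjoint supports, which together partition
the multiples of `s` in `ZMod (2sq)` into pairs. Over a ring of characteristic two, `e_d` (with
`d` outside the side information `S`) lies in the span of such a pair code and of `e_j, j ∈ S`
exactly when `d` is the partner of a paired position lying in `S`: otherwise the sum of the
coordinates in `{d}`, or in the pair of `d`, is a functional vanishing on all generators but not
on `e_d`. A window `{i, …, i + s - 1}` contains exactly one multiple of `s`, hence exactly one
decodable message.
-/

open Function Submodule

section PairCode

variable {R ι T : Type*} [Ring R] [DecidableEq ι]

def pairCode (f : T ⊕ T → ι) (t : T) : ι → R :=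
  Pi.single (f (.inl t)) 1 + Pi.single (f (.inr t)) 1

theorem single_notMem_span_of_sum_eq_zero [Nontrivial R] {X : Set (ι → R)} {W : Finset ι}
    {d : ι} (hd : d ∈ W) (hX : ∀ v ∈ X, ∑ j ∈ W, v j = 0) :
    Pi.single d (1 : R) ∉ span R X := by
  let φ : (ι → R) →ₗ[R] R := ∑ j ∈ W, LinearMap.proj j
  have hφ : ∀ v, φ v = ∑ j ∈ W, v j := fun v => by simp [φ]
  intro hmem
  have hker : span R X ≤ LinearMap.ker φ :=
    span_le.mpr fun v hv => by simpa [hφ] using hX v hv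
  have := hker hmem
  rw [LinearMap.mem_ker, hφ, Finset.sum_pi_single', if_pos hd] at this
  exact one_ne_zero this

theorem sum_pairCode (f : T ⊕ T → ι) (t : T) (W : Finset ι) :
    ∑ j ∈ W, pairCode (R := R) f t j =
      (if f (.inl t) ∈ W then 1 else 0) + if f (.inr t) ∈ W then 1 else 0 := by
  simp only [pairCode, Pi.add_apply, Finset.sum_add_distrib, Finset.sum_pi_single']

variable {f : T ⊕ T → ι} {S : Set ι}

theorem single_notMem_span_pairCode [Nontrivial R] [CharP R 2] {W : Finset ι} {d : ι}
    (hd : d ∈ W) (hWS : ∀ j ∈ S, j ∉ W) (hW : ∀ t, f (.inl t) ∈ W ↔ f (.inr t) ∈ W) :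
    Pi.single d (1 : R) ∉ span R (Set.range (pairCode f) ∪ {v | ∃ j ∈ S, v = Pi.single j 1}) := by
  refine single_notMem_span_of_sum_eq_zero hd ?_
  rintro _ (⟨t, rfl⟩ | ⟨j, hj, rfl⟩)
  · rw [sum_pairCode]
    by_cases h : f (.inr t) ∈ W
    · simp only [if_pos ((hW t).mpr h), if_pos h, CharTwo.add_self_eq_zero]
    · simp only [if_neg (mt (hW t).mp h), if_neg h, add_zero]
  · rw [Finset.sum_pi_single', if_neg (hWS j hj)]

theorem single_mem_span_pairCode_iff [Nontrivial R] [CharP R 2] (hf : Injective f) {d : ι}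
    (hd : d ∉ S) :
    Pi.single d (1 : R) ∈ span R (Set.range (pairCode f) ∪ {v | ∃ j ∈ S, v = Pi.single j 1}) ↔
      ∃ p, f p ∈ S ∧ d = f p.swap := by
  set V := span R (Set.range (pairCode f) ∪ {v | ∃ j ∈ S, v = Pi.single j (1 : R)})
  constructor
  · contrapose!
    intro hpartner
    by_cases hrange : ∃ p, f p = d
    · obtain ⟨p, rfl⟩ := hrange
      have hswap : f p.swap ∉ S := fun hS => hpartner p.swap hS (by rw [Sum.swap_swap])
      refine single_notMem_span_pairCode (W := {f p, f p.swap}) (by simp) ?_ fun t => ?_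
      · rintro j hj hjW
        simp only [Finset.mem_insert, Finset.mem_singleton] at hjW
        rcases hjW with rfl | rfl <;> contradiction
      · simp only [Finset.mem_insert, Finset.mem_singleton, hf.eq_iff]
        cases p <;> simp [eq_comm]
    · push Not at hrange
      refine single_notMem_span_pairCode (W := {d}) (Finset.mem_singleton_self d) ?_ fun t => ?_
      · rintro j hj hjd
        exact hd (Finset.mem_singleton.mp hjd ▸ hj)
      · simp only [Finset.mem_singleton, hrange, iff_self]
  · rintro ⟨p, hp, rfl⟩
    have hx : pairCode f (p.elim id id) ∈ V := subset_span (Or.inl ⟨_, rfl⟩)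
    have he : Pi.single (f p) (1 : R) ∈ V := subset_span (Or.inr ⟨_, hp, rfl⟩)
    convert sub_mem hx he using 1
    cases p <;> simp [pairCode]

theorem existsUnique_single_mem_span_pairCode [Nontrivial R] [CharP R 2] (hf : Injective f)
    (hS : ∃! j, j ∈ S ∧ j ∈ Set.range f) :
    ∃! d, d ∉ S ∧
      Pi.single d (1 : R) ∈ span R (Set.range (pairCode f) ∪ {v | ∃ j ∈ S, v = Pi.single j 1}) := by
  obtain ⟨_, ⟨hpS, p, rfl⟩, huniq⟩ := hS
  have hswap : f p.swap ∉ S := fun h => by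
    have := hf (huniq _ ⟨h, _, rfl⟩)
    cases p <;> simp at this
  refine ⟨f p.swap, ⟨hswap, (single_mem_span_pairCode_iff hf hswap).mpr ⟨p, hpS, rfl⟩⟩, ?_⟩
  rintro d ⟨hd, hmem⟩
  obtain ⟨p', hp'S, rfl⟩ := (single_mem_span_pairCode_iff hf hd).mp hmem
  rw [hf (huniq _ ⟨hp'S, p', rfl⟩)]

end PairCode

section Multiples

variable {m s : ℕ}

theorem natCast_mul_eq_natCast_mul_iff {n : ℕ} (hs : 0 < s) (hm : m = n * s) {a b : ℕ} :
    ((a * s : ℕ) : ZMod m) = ((b * s : ℕ) : ZMod m) ↔ (a : ZMod n) = b := by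
  subst hm
  rw [ZMod.natCast_eq_natCast_iff', ZMod.natCast_eq_natCast_iff', Nat.mul_mod_mul_right,
    Nat.mul_mod_mul_right]
  exact Nat.mul_left_inj hs.ne'

theorem castHom_eq_zero_iff_exists_natCast_mul [NeZero m] (h : s ∣ m) (j : ZMod m) :
    ZMod.castHom h (ZMod s) j = 0 ↔ ∃ k : ℕ, ((k * s : ℕ) : ZMod m) = j := by
  constructor
  · intro hj
    rw [← ZMod.natCast_zmod_val j, map_natCast, ZMod.natCast_eq_zero_iff] at hj
    obtain ⟨k, hk⟩ := hj
    exact ⟨k, by rw [mul_comm, ← hk, ZMod.natCast_zmod_val]⟩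
  · rintro ⟨k, rfl⟩
    rw [map_natCast, Nat.cast_mul, ZMod.natCast_self, mul_zero]

theorem existsUnique_add_lt_mem_range_natCast_mul [NeZero m] (h : s ∣ m) (i : ZMod m) :
    ∃! j, (∃ a : ℕ, a < s ∧ j = i + a) ∧ j ∈ Set.range fun k : ℕ => ((k * s : ℕ) : ZMod m) := by
  have : NeZero s := ⟨by rintro rfl; exact NeZero.ne m (zero_dvd_iff.mp h)⟩
  simp only [Set.mem_range, ← castHom_eq_zero_iff_exists_natCast_mul h]
  set c := ZMod.castHom h (ZMod s)
  refine ⟨i + ((-c i).val : ℕ), ⟨⟨_, ZMod.val_lt _, rfl⟩, ?_⟩, ?_⟩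
  · rw [map_add, map_natCast, ZMod.natCast_zmod_val, add_neg_cancel]
  · rintro _ ⟨⟨a, ha, rfl⟩, hc⟩
    rw [map_add, map_natCast, add_comm, add_eq_zero_iff_eq_neg] at hc
    rw [← hc, ZMod.val_natCast_of_lt ha]

end Multiples

section SupportIndex

variable {q : ℕ}

def supportIndex : Fin q ⊕ Fin q → ℕ :=
  Sum.elim (fun t => 2 * (t.val + 1)) (fun t => 2 * (t.val + 1) - 1)

theorem bijective_supportIndex_cast (hq : 0 < q) :
    Bijective fun p : Fin q ⊕ Fin q => (supportIndex p : ZMod (2 * q)) := by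
  have : NeZero (2 * q) := ⟨by omega⟩
  have hbounds : ∀ p : Fin q ⊕ Fin q, 1 ≤ supportIndex p ∧ supportIndex p - 1 < 2 * q := by
    rintro (t | t) <;> simp only [supportIndex, Sum.elim_inl, Sum.elim_inr] <;> omega
  refine (Fintype.bijective_iff_injective_and_card _).mpr ⟨fun p p' h => ?_, ?_⟩
  · rw [ZMod.natCast_eq_natCast_iff, ← Nat.sub_add_cancel (hbounds p).1,
      ← Nat.sub_add_cancel (hbounds p').1] at h
    have := (Nat.ModEq.add_right_cancel' 1 h).eq_of_lt_of_lt (hbounds p).2 (hbounds p').2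
    rcases p with t | t <;> rcases p' with t' | t' <;>
      simp only [supportIndex, Sum.elim_inl, Sum.elim_inr, Sum.inl.injEq, Sum.inr.injEq,
        reduceCtorEq] at this ⊢ <;> omega
  · simp only [Fintype.card_sum, Fintype.card_fin, ZMod.card]
    ring

variable {m s : ℕ}

theorem injective_supportIndex_mul (hq : 0 < q) (hs : 0 < s) (hm : m = 2 * q * s) :
    Injective fun p : Fin q ⊕ Fin q => ((supportIndex p * s : ℕ) : ZMod m) := fun _ _ h =>
  (bijective_supportIndex_cast hq).injective ((natCast_mul_eq_natCast_mul_iff hs hm).mp h)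

theorem range_supportIndex_mul (hq : 0 < q) (hs : 0 < s) (hm : m = 2 * q * s) :
    Set.range (fun p : Fin q ⊕ Fin q => ((supportIndex p * s : ℕ) : ZMod m)) =
      Set.range fun k : ℕ => ((k * s : ℕ) : ZMod m) := by
  refine subset_antisymm (Set.range_subset_iff.mpr fun p => ⟨_, rfl⟩) ?_
  rintro _ ⟨k, rfl⟩
  obtain ⟨p, hp⟩ := (bijective_supportIndex_cast hq).surjective k
  exact ⟨p, (natCast_mul_eq_natCast_mul_iff hs hm).mpr hp⟩

end SupportIndex

/-- For `m = 2sq`, the GF(2) code with codewords `x t = e_{2ts} + e_{(2t-1)s}` lets every user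
decode exactly one message outside its side information set. -/
theorem stmt_7 (s q : ℕ) (hs : 0 < s) (hq : 0 < q) (m : ℕ) (hm : m = 2 * s * q)
    (A : ZMod m → Set (ZMod m))
    (hA : ∀ i, A i = {j | ∃ a : ℕ, a < s ∧ j = i + (a : ZMod m)})
    (x : Fin q → ZMod m → ZMod 2)
    (hx : ∀ t, x t = Pi.single (((2 * (t.val + 1) * s : ℕ)) : ZMod m) 1
        + Pi.single ((((2 * (t.val + 1) - 1) * s : ℕ)) : ZMod m) 1) :
    ∀ i : ZMod m, ∃! dd : ZMod m, dd ∉ A i ∧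
      Pi.single dd (1 : ZMod 2) ∈ Submodule.span (ZMod 2)
        (Set.range x ∪ {v | ∃ j ∈ A i, v = Pi.single j (1 : ZMod 2)}) := by
  intro i
  have hm' : m = 2 * q * s := by rw [hm]; ring
  have : NeZero m := ⟨by rw [hm']; positivity⟩
  obtain rfl : x = pairCode fun p => ((supportIndex p * s : ℕ) : ZMod m) := funext hx
  refine existsUnique_single_mem_span_pairCode (injective_supportIndex_mul hq hs hm') ?_
  rw [hA i, range_supportIndex_mul hq hs hm']
  exact existsUnique_add_lt_mem_range_natCast_mul (Dvd.intro_left _ hm'.symm) i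
end

section
/- Let F be a field, m ≥ 5, and for i ∈ [m] (indices mod m) let A_i = {2i-1, 2i} ⊆ ZMod m with m even, so the sets A_i for i ∈ [m/2] are pairwise disjoint intervals of length 2 covering ZMod m. Let E ≤ F^m be a subspace such that for each user i there exist d_i ∉ A_i and v_i ∈ E with supp(v_i) ⊆ A_i ∪ {d_i} and (v_i)_{d_i} ≠ 0, and the privacy condition holds: for each i and each j ∉ A_i ∪ {d_i} no vector of E has support in A_i ∪ {j} with nonzero j-th coordinate. Then e_t ∉ E for all t ∈ [m]. -/
/-!
If `e_t ∈ E`, privacy forces every user whose side information misses `t` to demand `t`.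
Let `t ∈ A i`. Clearing the `t`-coordinate of the decoding vector of user `i` gives a vector
`u ∈ E` with `u (d i) ≠ 0`, supported on `(A i \ {t}) ∪ {d i}`. If `u` is supported on `{d i}`
alone, it violates privacy of any third user `l` (whose demand is `t ≠ d i`). Otherwise its
support contains the partner `s` of `t` in `A i`, and it violates privacy of the user `k` with
`d i ∈ A k`, since `u` is supported on `A k ∪ {s}` while `s ∉ A k ∪ {t}`.
-/

open Function

section PrivateCode

variable {ι α F : Type*} [Field F]

def IsDecodable (A : ι → Set α) (d : ι → α) (E : Submodule F (α → F)) : Prop :=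
  ∀ i, d i ∉ A i ∧ ∃ v ∈ E, v (d i) ≠ 0 ∧ support v ⊆ A i ∪ {d i}

def IsPrivate (A : ι → Set α) (d : ι → α) (E : Submodule F (α → F)) : Prop :=
  ∀ i, ∀ j ∉ A i ∪ {d i}, ¬ ∃ v ∈ E, v j ≠ 0 ∧ support v ⊆ A i ∪ {j}

variable {A : ι → Set α} {d : ι → α} {E : Submodule F (α → F)}

theorem IsPrivate.mem_of_support_subset (hE : IsPrivate A d E) {i : ι} {j : α} {v : α → F}
    (hv : v ∈ E) (hvj : v j ≠ 0) (hsupp : support v ⊆ A i ∪ {j}) : j ∈ A i ∪ {d i} := by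
  by_contra hj
  exact hE i j hj ⟨v, hv, hvj, hsupp⟩

theorem IsPrivate.demand_eq_of_single_mem [DecidableEq α] (hE : IsPrivate A d E) {t : α}
    (ht : Pi.single t (1 : F) ∈ E) {k : ι} (htk : t ∉ A k) : d k = t := by
  have hsupp : support (Pi.single t (1 : F)) ⊆ A k ∪ {t} :=
    Pi.support_single_subset.trans Set.subset_union_right
  have := hE.mem_of_support_subset ht (by simp) hsupp
  simp_all [eq_comm]

theorem Submodule.update_zero_mem [DecidableEq α] {v : α → F} {t : α} (hv : v ∈ E)
    (ht : Pi.single t (1 : F) ∈ E) : update v t 0 ∈ E := by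
  have : update v t 0 = v - v t • Pi.single t 1 := by
    ext s
    rcases eq_or_ne s t with rfl | hs <;> simp [*]
  exact this ▸ E.sub_mem hv (E.smul_mem _ ht)

theorem eq_of_mem_pair_of_ne {x y r s t : α} (hr : r ∈ ({x, y} : Set α))
    (hs : s ∈ ({x, y} : Set α)) (ht : t ∈ ({x, y} : Set α)) (hrt : r ≠ t) (hst : s ≠ t) :
    r = s := by
  simp only [Set.mem_insert_iff, Set.mem_singleton_iff] at hr hs ht
  grind

theorem single_notMem_of_isPrivate [DecidableEq α] (hdisj : Pairwise (Disjoint on A))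
    (hcover : ∀ x, ∃ i, x ∈ A i) (hpair : ∀ i, ∃ x y, A i = {x, y})
    (hcard : 3 ≤ ENat.card ι) (hdec : IsDecodable A d E) (hpriv : IsPrivate A d E) (t : α) :
    Pi.single t (1 : F) ∉ E := by
  intro ht
  have block_eq : ∀ {x i k}, x ∈ A i → x ∈ A k → i = k := fun hi hk =>
    hdisj.eq (Set.not_disjoint_iff.mpr ⟨_, hi, hk⟩)
  have demand_eq : ∀ {k}, t ∉ A k → d k = t := hpriv.demand_eq_of_single_mem ht
  obtain ⟨i, hti⟩ := hcover t
  obtain ⟨hdi, v, hv, hvd, hvsupp⟩ := hdec i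
  have hdt : d i ≠ t := fun h => hdi (h ▸ hti)
  obtain ⟨k, hdk⟩ := hcover (d i)
  have hki : k ≠ i := fun h => hdi (h ▸ hdk)
  have hu : update v t 0 ∈ E := E.update_zero_mem hv ht
  have hud : update v t 0 (d i) ≠ 0 := by simpa [hdt] using hvd
  by_cases hsupp : support (update v t 0) ⊆ {d i}
  · obtain ⟨l, hli, hlk⟩ := ENat.exists_ne_ne_of_three_le hcard i k
    rcases hpriv.mem_of_support_subset hu hud (hsupp.trans Set.subset_union_right) with h | h
    · exact hlk (block_eq h hdk)
    · exact hdt (h.trans (demand_eq fun h => hli (block_eq h hti)))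
  · obtain ⟨s, hs, hsd⟩ := Set.not_subset.mp hsupp
    have hsvt : s ∈ support v \ {t} := support_update_zero v t ▸ hs
    have hsi : s ∈ A i := (hvsupp hsvt.1).resolve_right hsd
    have hsupp' : support (update v t 0) ⊆ A k ∪ {s} := by
      rw [support_update_zero]
      rintro r ⟨hr, hrt⟩
      rcases hvsupp hr with hr | hr
      · obtain ⟨x, y, hxy⟩ := hpair i
        rw [hxy] at hti hsi hr
        exact .inr (eq_of_mem_pair_of_ne hr hsi hti hrt hsvt.2)
      · exact .inl (hr ▸ hdk)
    have hsk : s ∉ A k := fun h => hki (block_eq h hsi)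
    rcases hpriv.mem_of_support_subset hu hs hsupp' with h | h
    · exact hsk h
    · exact hsvt.2 (h.trans (demand_eq fun h => hki (block_eq h hti)))

end PrivateCode

section ConsecutivePairs

variable {m : ℕ}

def consecutivePair (m : ℕ) (i : Fin (m / 2)) : Set (ZMod m) :=
  {((2 * i.val + 1 : ℕ) : ZMod m), ((2 * i.val + 2 : ℕ) : ZMod m)}

-- Shifting by one turns the pairs `{2i+1, 2i+2}` into `{2i, 2i+1}`, i.e. the fibres of `· / 2`.
theorem mem_consecutivePair_iff [NeZero m] {i : Fin (m / 2)} {x : ZMod m} :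
    x ∈ consecutivePair m i ↔ (x - 1).val / 2 = i.val := by
  have hi := i.isLt
  constructor
  · rintro (rfl | rfl)
    · rw [show ((2 * i.val + 1 : ℕ) : ZMod m) - 1 = ((2 * i.val : ℕ) : ZMod m) by push_cast; ring,
        ZMod.val_cast_of_lt (by omega)]
      omega
    · rw [show ((2 * i.val + 2 : ℕ) : ZMod m) - 1 = ((2 * i.val + 1 : ℕ) : ZMod m) by
          push_cast; ring, ZMod.val_cast_of_lt (by omega)]
      omega
  · intro h
    have hx : x = ((x - 1).val : ZMod m) + 1 := by simp
    rcases (by omega : (x - 1).val = 2 * i.val ∨ (x - 1).val = 2 * i.val + 1) with h' | h'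
    · exact .inl (hx.trans (by rw [h', Nat.cast_succ]))
    · exact .inr (hx.trans (by rw [h']; push_cast; ring))

theorem pairwise_disjoint_consecutivePair [NeZero m] :
    Pairwise (Disjoint on consecutivePair m) := fun _ _ hik =>
  Set.disjoint_left.mpr fun _ hi hk =>
    hik (Fin.ext ((mem_consecutivePair_iff.mp hi).symm.trans (mem_consecutivePair_iff.mp hk)))

theorem exists_mem_consecutivePair [NeZero m] (hm : Even m) (x : ZMod m) :
    ∃ i, x ∈ consecutivePair m i := by
  have := ZMod.val_lt (x - 1)
  obtain ⟨r, rfl⟩ := hm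
  exact ⟨⟨(x - 1).val / 2, by omega⟩, mem_consecutivePair_iff.mpr rfl⟩

end ConsecutivePairs

/-- Proposition 3 (case g = s = 2): side information sets `A i = {2i-1, 2i}`; in a valid
linear private code no standard basis vector lies in the code span. -/
theorem stmt_10 (F : Type*) [Field F] (m : ℕ) (hm : 5 ≤ m) (hme : Even m)
    (A : Fin (m / 2) → Set (ZMod m))
    (hA : ∀ i, A i = {((2 * i.val + 1 : ℕ) : ZMod m), ((2 * i.val + 2 : ℕ) : ZMod m)})
    (E : Submodule F (ZMod m → F)) (d : Fin (m / 2) → ZMod m)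
    (hdec : ∀ i, d i ∉ A i ∧ ∃ v ∈ E, v (d i) ≠ 0 ∧ ∀ j, v j ≠ 0 → j ∈ A i ∪ {d i})
    (hpriv : ∀ i, ∀ j ∉ A i ∪ {d i},
      ¬ ∃ v ∈ E, v j ≠ 0 ∧ ∀ t, v t ≠ 0 → t ∈ A i ∪ {j}) :
    ∀ t : ZMod m, Pi.single t (1 : F) ∉ E := by
  have : NeZero m := ⟨by omega⟩
  obtain rfl : A = consecutivePair m := funext hA
  have hcard : 3 ≤ ENat.card (Fin (m / 2)) := by
    rw [ENat.card_eq_coe_fintype_card, Fintype.card_fin]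
    obtain ⟨r, rfl⟩ := hme
    exact_mod_cast (by omega : 3 ≤ (r + r) / 2)
  exact single_notMem_of_isPrivate pairwise_disjoint_consecutivePair
    (exists_mem_consecutivePair hme) (fun i => ⟨_, _, rfl⟩) hcard hdec hpriv
end

section
/- Let m be even and s = g = 2, with n = m/2 users whose side information sets A_i = {2i-1, 2i} (mod m) are pairwise disjoint. Under the linear decodability and privacy conditions (each user decodes exactly one message outside its side information, via a linear code with row span E, and e_t ∉ E for all t), the dimension of E is at least ⌈m/4⌉. -/
/-!
Each user `i` decodes with a vector `v i ∈ E` supported on `A i ∪ {d i}`. Since no standard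
basis vector lies in `E`, `v i` is nonzero at some `p i ∈ A i`, and by disjointness `v j (p i) ≠ 0`
forces `j = i` or `d j ∈ A i`. Order the users and call `i` forward (backward) if the block
containing `d i`, if any, comes after (before) `i`. On the forward users the matrix
`(v j (p i))` is triangular, and so it is on the backward users for the reverse order; hence both
families are linearly independent in `E`. Every user is forward or backward, so one of the two
families has at least half of the users.
-/

open Module Finset

theorem linearIndependent_of_apply_eq_zero_of_lt {ι K R : Type*} [Ring R] [NoZeroDivisors R]
    [LinearOrder ι] {v : ι → K → R} {p : ι → K} (hdiag : ∀ i, v i (p i) ≠ 0)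
    (hlt : ∀ ⦃i j⦄, i < j → v j (p i) = 0) :
    LinearIndependent R v := by
  classical
  rw [linearIndependent_iff']
  intro s c hsum
  by_contra! hne
  set S := s.filter (fun i => c i ≠ 0)
  have hS : S.Nonempty := by
    obtain ⟨i, his, hci⟩ := hne
    exact ⟨i, mem_filter.mpr ⟨his, hci⟩⟩
  obtain ⟨his, hci⟩ := mem_filter.mp (S.min'_mem hS)
  have hcoord : ∑ j ∈ s, c j * v j (p (S.min' hS)) = 0 := by
    simpa using congrFun hsum (p (S.min' hS))
  rw [sum_eq_single_of_mem _ his] at hcoord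
  · exact mul_ne_zero hci (hdiag _) hcoord
  · intro j hjs hji
    rcases hji.lt_or_gt with hj | hj
    · have hcj : c j = 0 := by
        by_contra hcj
        exact (S.min'_le j (mem_filter.mpr ⟨hjs, hcj⟩)).not_gt hj
      rw [hcj, zero_mul]
    · rw [hlt hj, mul_zero]

section LinearCode

variable {F K ι : Type*} [Field F] {E : Submodule F (K → F)}

theorem Submodule.card_le_finrank_of_linearIndependent [Module.Finite F E] [Fintype ι]
    {w : ι → K → F} (hw : LinearIndependent F w) (hwE : ∀ i, w i ∈ E) :
    Fintype.card ι ≤ finrank F E := by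
  rw [← finrank_span_eq_card hw]
  exact Submodule.finrank_mono (Submodule.span_le.mpr (Set.range_subset_iff.mpr hwE))

theorem exists_mem_apply_ne_zero_of_single_notMem [DecidableEq K]
    (hbasis : ∀ t : K, Pi.single t (1 : F) ∉ E) {A : Set K} {d : K} {v : K → F} (hv : v ∈ E)
    (hvd : v d ≠ 0) (hsupp : ∀ t, v t ≠ 0 → t ∈ A ∪ {d}) :
    ∃ t ∈ A, v t ≠ 0 := by
  by_contra! hA
  have hv_eq : v = Pi.single d (v d) := by
    funext t
    by_cases ht : t = d
    · subst ht
      simp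
    · rw [Pi.single_eq_of_ne ht]
      by_contra hvt
      rcases hsupp t hvt with hmem | hmem
      · exact hvt (hA t hmem)
      · exact ht hmem
  apply hbasis d
  have hsingle : Pi.single d (1 : F) = (v d)⁻¹ • v := by
    rw [hv_eq, ← Pi.single_smul, Pi.single_eq_same, smul_eq_mul, inv_mul_cancel₀ hvd]
  rw [hsingle]
  exact E.smul_mem _ hv

theorem forall_lt_or_forall_gt_of_notMem [LinearOrder ι] {A : ι → Set K}
    (hdisj : Pairwise (Function.onFun Disjoint A)) {x : K} {i : ι} (hx : x ∉ A i) :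
    (∀ k, x ∈ A k → i < k) ∨ (∀ k, x ∈ A k → k < i) := by
  by_contra! h
  obtain ⟨⟨k, hk, hki⟩, ⟨k', hk', hik'⟩⟩ := h
  have hkk' : k = k' := by
    by_contra hne
    exact Set.disjoint_left.mp (hdisj hne) hk hk'
  subst hkk'
  exact hx (le_antisymm hik' hki ▸ hk)

theorem card_le_two_mul_finrank_of_disjoint [Fintype ι] [Finite K] [DecidableEq K]
    {A : ι → Set K} (hdisj : Pairwise (Function.onFun Disjoint A)) {d : ι → K}
    (hdec : ∀ i, d i ∉ A i ∧ ∃ v ∈ E, v (d i) ≠ 0 ∧ ∀ j, v j ≠ 0 → j ∈ A i ∪ {d i})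
    (hbasis : ∀ t : K, Pi.single t (1 : F) ∉ E) :
    Fintype.card ι ≤ 2 * finrank F E := by
  classical
  let : LinearOrder ι := LinearOrder.lift' _ (Fintype.equivFin ι).injective
  choose v hvE hvd hvs using fun i => (hdec i).2
  choose p hpA hpv using fun i =>
    exists_mem_apply_ne_zero_of_single_notMem hbasis (hvE i) (hvd i) (hvs i)
  have hvanish : ∀ i j, v j (p i) ≠ 0 → j ≠ i → d j ∈ A i := by
    intro i j hv hji
    rcases hvs j _ hv with hmem | hmem
    · exact absurd (hpA i) (Set.disjoint_left.mp (hdisj hji) hmem)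
    · exact hmem ▸ hpA i
  set T₁ := univ.filter fun i => ∀ k, d i ∈ A k → i < k
  set T₂ := univ.filter fun i => ∀ k, d i ∈ A k → k < i
  have hcover : T₁ ∪ T₂ = univ := eq_univ_of_forall fun i => by
    simpa [T₁, T₂] using forall_lt_or_forall_gt_of_notMem hdisj (hdec i).1
  have h₁ : #T₁ ≤ finrank F E := by
    have hli : LinearIndependent F fun i : T₁ => v i := by
      refine linearIndependent_of_apply_eq_zero_of_lt (p := fun i => p i) (fun i => hpv i) ?_
      intro i j hij
      by_contra hv
      have hj := (mem_filter.mp j.2).2 i (hvanish i j hv (Subtype.coe_ne_coe.mpr hij.ne'))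
      exact lt_asymm hij hj
    simpa using Submodule.card_le_finrank_of_linearIndependent hli fun i => hvE i
  have h₂ : #T₂ ≤ finrank F E := by
    have hli : LinearIndependent F fun i : (T₂)ᵒᵈ => v (OrderDual.ofDual i).1 := by
      refine linearIndependent_of_apply_eq_zero_of_lt
        (p := fun i => p (OrderDual.ofDual i).1) (fun i => hpv _) ?_
      intro i j hij
      by_contra hv
      have hj := (mem_filter.mp (OrderDual.ofDual j).2).2 _
        (hvanish _ _ hv (Subtype.coe_ne_coe.mpr hij.ne'))
      exact lt_asymm hij hj
    simpa using Submodule.card_le_finrank_of_linearIndependent hli fun i => hvE _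
  calc Fintype.card ι = #(T₁ ∪ T₂) := by rw [hcover, card_univ]
    _ ≤ #T₁ + #T₂ := card_union_le _ _
    _ ≤ 2 * finrank F E := by omega

end LinearCode

theorem stmt_11_general (F : Type*) [Field F] (m : ℕ) (hm : 0 < m) (hme : Even m)
    (A : Fin (m / 2) → Set (ZMod m))
    (hdisj : Pairwise (Function.onFun Disjoint A))
    (E : Submodule F (ZMod m → F)) (d : Fin (m / 2) → ZMod m)
    (hdec : ∀ i, d i ∉ A i ∧ ∃ v ∈ E, v (d i) ≠ 0 ∧ ∀ j, v j ≠ 0 → j ∈ A i ∪ {d i})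
    (hbasis : ∀ t : ZMod m, Pi.single t (1 : F) ∉ E) :
    (m + 3) / 4 ≤ Module.finrank F E := by
  have : NeZero m := ⟨hm.ne'⟩
  have hcard := card_le_two_mul_finrank_of_disjoint hdisj hdec hbasis
  rw [Fintype.card_fin] at hcard
  obtain ⟨k, rfl⟩ := hme
  omega

/-- Linear converse for `s = g = 2`: with pairwise disjoint side information sets
`A i = {2i-1, 2i}`, decodability, privacy, and no standard basis vector in the span,
the code dimension is at least `⌈m/4⌉`. -/
theorem stmt_11 (F : Type*) [Field F] (m : ℕ) (hm : 0 < m) (hme : Even m)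
    (A : Fin (m / 2) → Set (ZMod m))
    (hA : ∀ i, A i = {((2 * i.val + 1 : ℕ) : ZMod m), ((2 * i.val + 2 : ℕ) : ZMod m)})
    (hdisj : Pairwise (Function.onFun Disjoint A))
    (E : Submodule F (ZMod m → F)) (d : Fin (m / 2) → ZMod m)
    (hdec : ∀ i, d i ∉ A i ∧ ∃ v ∈ E, v (d i) ≠ 0 ∧ ∀ j, v j ≠ 0 → j ∈ A i ∪ {d i})
    (hpriv : ∀ i, ∀ j ∉ A i ∪ {d i},
      ¬ ∃ v ∈ E, v j ≠ 0 ∧ ∀ t, v t ≠ 0 → t ∈ A i ∪ {j})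
    (hbasis : ∀ t : ZMod m, Pi.single t (1 : F) ∉ E) :
    (m + 3) / 4 ≤ Module.finrank F E :=
  stmt_11_general F m hm hme A hdisj E d hdec hbasis
end

section
/- Let F = GF(2), m ≥ 2s + 2 with 2 < s, g = 2, and users i ∈ [m/2] with side information A_i = {2(i-1)+1, ..., 2(i-1)+s} (mod m), s even. Consider the two transmissions x_1 = e_{s+1} and x_2 = e_3 + e_{s+1} + e_{s+2} + e_{s+3} ∈ F^m. Then: (a) every user i with s+1 ∉ A_i can decode w_{s+1} from x_1; (b) every user i with s+1 ∈ A_i (i.e., i ∈ {2, ..., s/2 + 1}) can decode exactly one message from x_2 (user 2 decodes w_{s+3}, users 3, ..., s/2+1 decode w_3); (c) no user can decode more than one message outside its side information from x_1 and x_2 combined. -/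
/-!
A user with side information `I` who receives transmissions `T` learns `e_k` (`k ∉ I`) exactly
when `e_k` agrees off `I` with a linear combination of `T`; over `GF(2)` these are `0`, `x₁`,
`x₂` and `x₁ + x₂`. If `s + 1 ∈ I`, then `x₁` vanishes off `I`, so only `x₂` can restrict to a
unit vector, and it determines `k`. If `s + 1 ∉ I`, then `s + 2 ∉ I` and `I` does not contain
both `3` and `s + 3`, so `x₂` and `x₁ + x₂` are nonzero at two points off `I`; only `x₁`
decodes, and `k = s + 1`.
-/

open Set Submodule

theorem ZMod.natCast_eq_natCast_iff_of_lt_two_mul {m n k : ℕ} (hn : n < m) (hk : k < 2 * m) :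
    (n : ZMod m) = k ↔ n = k ∨ n + m = k := by
  rw [ZMod.natCast_eq_natCast_iff', Nat.mod_eq_of_lt hn]
  rcases lt_or_ge k m with hkm | hkm
  · rw [Nat.mod_eq_of_lt hkm]
    omega
  · rw [Nat.mod_eq_sub_mod hkm, Nat.mod_eq_of_lt (by omega)]
    omega

theorem ZMod.natCast_ne_natCast_of_lt {m p q : ℕ} (hp : p < m) (hq : q < m) (hpq : p ≠ q) :
    (p : ZMod m) ≠ q := by
  rw [Ne, ZMod.natCast_eq_natCast_iff_of_lt_two_mul hp (by omega)]
  omega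

def cyclicInterval (m start len : ℕ) : Set (ZMod m) :=
  {j | ∃ a : ℕ, a < len ∧ j = ((start + a : ℕ) : ZMod m)}

theorem natCast_mem_cyclicInterval_iff {m start len n : ℕ} (hn : n < m) (hstart : start < m)
    (hlen : len ≤ m) :
    (n : ZMod m) ∈ cyclicInterval m start len ↔
      start ≤ n ∧ n < start + len ∨ n + m < start + len := by
  constructor
  · rintro ⟨a, ha, h⟩
    rw [ZMod.natCast_eq_natCast_iff_of_lt_two_mul hn (by omega)] at h
    omega
  · rintro (⟨h₁, h₂⟩ | h)
    · exact ⟨n - start, by omega, by congr 1; omega⟩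
    · refine ⟨n + m - start, by omega, ?_⟩
      rw [ZMod.natCast_eq_natCast_iff_of_lt_two_mul hn (by omega)]
      omega

section Decoding

variable {ι R : Type*} [DecidableEq ι]

theorem exists_eqOn_compl_of_mem_span_union_singles [Semiring R] {I : Set ι}
    {T : Set (ι → R)} {v : ι → R}
    (hv : v ∈ span R (T ∪ {v | ∃ j ∈ I, v = Pi.single j 1})) :
    ∃ u ∈ span R T, EqOn v u Iᶜ := by
  rw [span_union, mem_sup] at hv
  obtain ⟨u, hu, z, hz_span, rfl⟩ := hv
  have hz : z ∈ Submodule.pi Iᶜ fun _ ↦ (⊥ : Submodule R R) := by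
    refine span_le.2 ?_ hz_span
    rintro _ ⟨j, hj, rfl⟩ c hc
    exact (mem_bot R).2 (Pi.single_eq_of_ne (ne_of_mem_of_not_mem hj hc).symm 1)
  exact ⟨u, hu, fun c hc ↦ by simp [(mem_bot R).1 (hz c hc : z c ∈ (⊥ : Submodule R R))]⟩

theorem exists_eqOn_compl_of_mem_span_pair_union_singles [Semiring R] {I : Set ι}
    {x y v : ι → R} (hv : v ∈ span R ({x, y} ∪ {v | ∃ j ∈ I, v = Pi.single j 1})) :
    ∃ r₁ r₂ : R, EqOn v (r₁ • x + r₂ • y) Iᶜ := by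
  obtain ⟨u, hu, hvu⟩ := exists_eqOn_compl_of_mem_span_union_singles hv
  obtain ⟨r₁, r₂, rfl⟩ := mem_span_pair.1 hu
  exact ⟨r₁, r₂, hvu⟩

theorem single_mem_span_union_singles [Semiring R] {I : Set ι} {T : Set (ι → R)} {j : ι}
    (hj : j ∈ I) : Pi.single j 1 ∈ span R (T ∪ {v | ∃ j ∈ I, v = Pi.single j 1}) :=
  subset_span (Or.inr ⟨j, hj, rfl⟩)

theorem eq_of_eqOn_single [Zero R] [One R] {I : Set ι} {k c : ι} {u : ι → R}
    (h : EqOn (Pi.single k 1) u Iᶜ) (hc : c ∉ I) (hu : u c ≠ 0) : c = k := by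
  by_contra hne
  exact hu (by simpa [hne] using (h hc).symm)

theorem not_eqOn_single_of_ne [Zero R] [One R] {I : Set ι} {k p q : ι} {u : ι → R}
    (hpq : p ≠ q) (hp : p ∉ I) (hq : q ∉ I) (hup : u p ≠ 0) (huq : u q ≠ 0) :
    ¬EqOn (Pi.single k 1) u Iᶜ :=
  fun h ↦ hpq ((eq_of_eqOn_single h hp hup).trans (eq_of_eqOn_single h hq huq).symm)

theorem subsingleton_setOf_eqOn_single [Zero R] [One R] [NeZero (1 : R)] (I : Set ι)
    (w : ι → R) : {k | k ∉ I ∧ EqOn (Pi.single k 1) w Iᶜ}.Subsingleton :=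
  fun k ⟨hk, h⟩ _ ⟨_, h'⟩ ↦ eq_of_eqOn_single h' hk (by rw [← h hk]; simp)

theorem subsingleton_setOf_single_mem_span {a b c d : ι}
    (hab : a ≠ b) (hac : a ≠ c) (had : a ≠ d) (hbc : b ≠ c) (hbd : b ≠ d) (hcd : c ≠ d)
    {I : Set ι} (hcI : b ∉ I → c ∉ I) (hdI : a ∈ I → d ∉ I) :
    {k | k ∉ I ∧ Pi.single k (1 : ZMod 2) ∈ span (ZMod 2)
      (({Pi.single b 1, Pi.single a 1 + Pi.single b 1 + Pi.single c 1 + Pi.single d 1} :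
          Set (ι → ZMod 2)) ∪ {v | ∃ j ∈ I, v = Pi.single j 1})}.Subsingleton := by
  set x₂ : ι → ZMod 2 := Pi.single a 1 + Pi.single b 1 + Pi.single c 1 + Pi.single d 1
  have eq_zero_or_one : ∀ r : ZMod 2, r = 0 ∨ r = 1 := by decide
  by_cases hb : b ∈ I
  · refine (subsingleton_setOf_eqOn_single I x₂).anti fun k ⟨hk, hmem⟩ ↦ ⟨hk, ?_⟩
    obtain ⟨r₁, r₂, hku⟩ := exists_eqOn_compl_of_mem_span_pair_union_singles hmem
    rcases eq_zero_or_one r₂ with rfl | rfl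
    · have hkb : k = b := by
        rcases eq_zero_or_one r₁ with rfl | rfl <;> simpa [Pi.single_apply] using hku hk
      exact absurd (hkb ▸ hb) hk
    · exact fun c hc ↦ (hku hc).trans <| by
        simp [Pi.single_eq_of_ne (ne_of_mem_of_not_mem hb hc).symm]
  · refine (subsingleton_setOf_eqOn_single I (Pi.single b (1 : ZMod 2))).anti
      fun k ⟨hk, hmem⟩ ↦ ⟨hk, ?_⟩
    obtain ⟨r₁, r₂, hku⟩ := exists_eqOn_compl_of_mem_span_pair_union_singles hmem
    rcases eq_zero_or_one r₂ with rfl | rfl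
    · rcases eq_zero_or_one r₁ with rfl | rfl
      · simpa using hku hk
      · simpa using hku
    · by_cases ha : a ∈ I
      · exact absurd hku (not_eqOn_single_of_ne hcd (hcI hb) (hdI ha)
          (by simp [x₂, hac.symm, hbc.symm, hcd]) (by simp [x₂, had.symm, hbd.symm, hcd.symm]))
      · exact absurd hku (not_eqOn_single_of_ne hac.symm (hcI hb) ha
          (by simp [x₂, hac.symm, hbc.symm, hcd]) (by simp [x₂, hab, hac, had]))

end Decoding

/-- Two-transmission private scheme for `g = 2`, `s` even, `2 < s`, `m ≥ 2s+2`: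
`x₁ = e_{s+1}`, `x₂ = e_3 + e_{s+1} + e_{s+2} + e_{s+3}`.
(a) users without `s+1` decode `w_{s+1}` from `x₁`;
(b) user 2 decodes `w_{s+3}` and users `3, …, s/2+1` decode `w_3`;
(c) no user can decode more than one message outside its side information. -/
theorem stmt_13 (m s : ℕ) (hs : 2 < s) (hse : Even s) (hm : 2 * s + 2 ≤ m)
    (A : Fin (m / 2) → Set (ZMod m))
    (hA : ∀ i, A i = {j | ∃ a : ℕ, a < s ∧ j = ((2 * i.val + 1 + a : ℕ) : ZMod m)})
    (x₁ x₂ : ZMod m → ZMod 2)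
    (hx₁ : x₁ = Pi.single (((s + 1 : ℕ)) : ZMod m) 1)
    (hx₂ : x₂ = Pi.single (((3 : ℕ)) : ZMod m) 1 + Pi.single (((s + 1 : ℕ)) : ZMod m) 1
        + Pi.single (((s + 2 : ℕ)) : ZMod m) 1 + Pi.single (((s + 3 : ℕ)) : ZMod m) 1)
    (Sp : Fin (m / 2) → Submodule (ZMod 2) (ZMod m → ZMod 2))
    (hSp : ∀ i, Sp i = Submodule.span (ZMod 2)
        ({x₁, x₂} ∪ {v | ∃ j ∈ A i, v = Pi.single j (1 : ZMod 2)})) :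
    (∀ i, (((s + 1 : ℕ)) : ZMod m) ∉ A i →
      Pi.single (((s + 1 : ℕ)) : ZMod m) (1 : ZMod 2) ∈ Submodule.span (ZMod 2)
        (insert x₁ {v | ∃ j ∈ A i, v = Pi.single j (1 : ZMod 2)})) ∧
    (∀ i : Fin (m / 2), i.val = 1 →
      Pi.single (((s + 3 : ℕ)) : ZMod m) (1 : ZMod 2) ∈ Sp i) ∧
    (∀ i : Fin (m / 2), 2 ≤ i.val → i.val ≤ s / 2 →
      Pi.single (((3 : ℕ)) : ZMod m) (1 : ZMod 2) ∈ Sp i) ∧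
    (∀ i, {dd : ZMod m | dd ∉ A i ∧ Pi.single dd (1 : ZMod 2) ∈ Sp i}.Subsingleton) := by
  obtain ⟨t, rfl⟩ := hse
  subst hx₁
  have mem_A (i : Fin (m / 2)) (n : ℕ) (hn : n < m) : (n : ZMod m) ∈ A i ↔
      2 * i.val + 1 ≤ n ∧ n < 2 * i.val + 1 + (t + t) ∨ n + m < 2 * i.val + 1 + (t + t) := by
    rw [hA i]; exact natCast_mem_cyclicInterval_iff hn (by omega) (by omega)
  have single_mem (i : Fin (m / 2)) (n : ℕ) (hn : n < m)
      (hnA : 2 * i.val + 1 ≤ n ∧ n < 2 * i.val + 1 + (t + t)) :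
      Pi.single (n : ZMod m) (1 : ZMod 2) ∈ Sp i :=
    hSp i ▸ single_mem_span_union_singles ((mem_A i n hn).2 (.inl hnA))
  have hx₂_mem (i : Fin (m / 2)) : x₂ ∈ Sp i := hSp i ▸ subset_span (Or.inl (by simp))
  rw [hx₂] at hx₂_mem
  refine ⟨fun i _ ↦ subset_span (mem_insert _ _), fun i hi ↦ ?_, fun i hi₂ hi ↦ ?_, fun i ↦ ?_⟩
  · rw [← Submodule.add_mem_iff_right _ (add_mem (add_mem (single_mem i 3 (by omega) (by omega))
      (single_mem i (t + t + 1) (by omega) (by omega)))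
      (single_mem i (t + t + 2) (by omega) (by omega)))]
    exact hx₂_mem i
  · rw [← Submodule.add_mem_iff_left _ (single_mem i (t + t + 1) (by omega) (by omega)),
      ← Submodule.add_mem_iff_left _ (single_mem i (t + t + 2) (by omega) (by omega)),
      ← Submodule.add_mem_iff_left _ (single_mem i (t + t + 3) (by omega) (by omega))]
    exact hx₂_mem i
  · rw [hSp, hx₂]
    -- last two goals: `A i` starts at an odd index and `s` is even, so it cannot start at
    -- `s + 2`; and `3`, `s + 3` lie `s` apart, too far for an interval of length `s`
    refine subsingleton_setOf_single_mem_span ?_ ?_ ?_ ?_ ?_ ?_ ?_ ?_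
    iterate 6 exact ZMod.natCast_ne_natCast_of_lt (by omega) (by omega) (by omega)
    all_goals rw [mem_A i _ (by omega), mem_A i _ (by omega)]; omega
end

section
/- Let F be a field, E ≤ F^m a subspace, and suppose e_1 ∈ E. Let A_i = {i, ..., i+s-1} (mod m), 1 ≤ s < m - 1, and suppose the valid-code conditions hold (decodability of exactly one new message per user and privacy). Then every user i ∈ {2, ..., m-s+1} (those with 1 ∉ A_i) must have desired index d_i = 1. -/
namespace ZMod

theorem natCast_ne_one_of_two_le_of_le {m n : ℕ} (h2 : 2 ≤ n) (hnm : n ≤ m) :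
    (n : ZMod m) ≠ 1 := by
  rw [← Nat.cast_one, Ne, ZMod.natCast_eq_natCast_iff']
  rcases hnm.lt_or_eq with hlt | rfl
  · rw [Nat.mod_eq_of_lt hlt, Nat.mod_eq_of_lt (by omega)]
    omega
  · rw [Nat.mod_self, Nat.mod_eq_of_lt (by omega)]
    omega

end ZMod

section PrivateCode

variable {ι F : Type*} [DecidableEq ι] [Semiring F]

/-- A user holding the messages indexed by `A` can recover message `j` from the code `E`. -/
def Decodable (E : Submodule F (ι → F)) (A : Set ι) (j : ι) : Prop :=
  ∃ v ∈ E, v j ≠ 0 ∧ ∀ t, v t ≠ 0 → t ∈ A ∪ {j}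

theorem decodable_of_single_mem [Nontrivial F] {E : Submodule F (ι → F)} (A : Set ι) {j : ι}
    (hj : Pi.single j 1 ∈ E) : Decodable E A j := by
  refine ⟨Pi.single j 1, hj, by simp, fun t ht => Or.inr ?_⟩
  by_contra htj
  exact ht (Pi.single_eq_of_ne htj 1)

theorem eq_of_single_mem_of_private [Nontrivial F] {E : Submodule F (ι → F)} {A : Set ι}
    {d j : ι} (hpriv : ∀ k ∉ A ∪ {d}, ¬ Decodable E A k) (hj : Pi.single j 1 ∈ E)
    (hjA : j ∉ A) : d = j := by
  by_contra hdj
  refine hpriv j ?_ (decodable_of_single_mem A hj)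
  rintro (hA | hd)
  · exact hjA hA
  · exact hdj (Set.mem_singleton_iff.mp hd).symm

end PrivateCode

theorem stmt_19_general (F : Type*) [Field F] (m s : ℕ)
    (A : ZMod m → Set (ZMod m))
    (hA : ∀ i, A i = {j | ∃ a : ℕ, a < s ∧ j = i + (a : ZMod m)})
    (E : Submodule F (ZMod m → F)) (d : ZMod m → ZMod m)
    (he1 : Pi.single ((1 : ℕ) : ZMod m) (1 : F) ∈ E)
    (hpriv : ∀ i, ∀ j ∉ A i ∪ {d i},
      ¬ ∃ v ∈ E, v j ≠ 0 ∧ ∀ t, v t ≠ 0 → t ∈ A i ∪ {j}) :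
    ∀ i : ℕ, 2 ≤ i → i ≤ m - s + 1 → d ((i : ℕ) : ZMod m) = ((1 : ℕ) : ZMod m) := by
  intro i hi2 him
  refine eq_of_single_mem_of_private (hpriv _) he1 ?_
  rw [hA]
  rintro ⟨a, has, h1⟩
  have hia : 2 ≤ i + a ∧ i + a ≤ m := by omega
  rw [← Nat.cast_add, Nat.cast_one] at h1
  exact ZMod.natCast_ne_one_of_two_le_of_le hia.1 hia.2 h1.symm

/-- First step of Proposition 1: if `e_1` lies in the code span `E` of a valid private code
with side information sets `A i = {i, …, i+s-1}` (mod `m`), then every user `i ∈ {2, …, m-s+1}`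
must have desired index `d i = 1`. -/
theorem stmt_19 (F : Type*) [Field F] (m s : ℕ) (hs1 : 1 ≤ s) (hsm : s < m - 1)
    (A : ZMod m → Set (ZMod m))
    (hA : ∀ i, A i = {j | ∃ a : ℕ, a < s ∧ j = i + (a : ZMod m)})
    (E : Submodule F (ZMod m → F)) (d : ZMod m → ZMod m)
    (he1 : Pi.single ((1 : ℕ) : ZMod m) (1 : F) ∈ E)
    (hdec : ∀ i, d i ∉ A i ∧ ∃ v ∈ E, v (d i) ≠ 0 ∧ ∀ j, v j ≠ 0 → j ∈ A i ∪ {d i})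
    (hpriv : ∀ i, ∀ j ∉ A i ∪ {d i},
      ¬ ∃ v ∈ E, v j ≠ 0 ∧ ∀ t, v t ≠ 0 → t ∈ A i ∪ {j}) :
    ∀ i : ℕ, 2 ≤ i → i ≤ m - s + 1 → d ((i : ℕ) : ZMod m) = ((1 : ℕ) : ZMod m) :=
  stmt_19_general F m s A hA E d he1 hpriv
end
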